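/- Let μ be a finite signed measure on a finite product of measurable spaces (∏_{j=1}^p Ω_j, ⊗ 𝒜_j) equipped with product probability measures P_j. Then there exists a unique family (μ_H)_{H ⊆ {1,...,p}} of finite signed measures, μ_H on ∏_{j∈H} Ω_j, each with all marginals zero (μ_H(∏_{j∈H} A_j) = 0 whenever A_j = Ω_j for some j ∈ H), such that for all measurable rectangles, μ(∏_j A_j) = ∑_{H⊆J} (∏_{j∉H} P_j(A_j)) · μ_H(∏_{j∈H} A_j). -/

import Mathlib

/-!
Fix measurable sets `A j`, put `a j = P j (A j)` and let `f G` be the `μ`-mass of the cylinder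
with base `A j` for `j ∈ G` (and `Ω j` elsewhere). Evaluating the decomposition on that cylinder
and using the zero marginals gives `f G = ∑_{H ⊆ G} (∏_{j ∈ G \ H} a j) μ_H(A)`. This triangular
system is solved by a weighted Möbius inversion,
`μ_H(A) = ∑_{G ⊆ H} (-1)^|H \ G| (∏_{j ∈ H \ G} a j) f G`, which proves uniqueness since
rectangles form a generating π-system. Conversely these values are attained by a signed measure:
the `G`-th term is the image of `μ ⊗ ⊗ⱼ P j` under the map taking the coordinates in `G` from the
first factor and the others from the second. If `A j = Ω j` for some `j ∈ H`, the terms for `G`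
and `insert j G` cancel, so the components have zero marginals.
-/

namespace Finset

variable {ι R : Type*} [DecidableEq ι] [CommRing R]

theorem sum_Icc_neg_one_pow_card_sdiff_left (K G : Finset ι) :
    ∑ H ∈ Icc K G, (-1 : R) ^ #(H \ K) = if K = G then 1 else 0 := by
  by_cases hKG : K ⊆ G
  · have hcancel : ∀ L ∈ (G \ K).powerset, (K ∪ L) \ K = L := fun L hL =>
      union_sdiff_cancel_left (disjoint_of_subset_right (mem_powerset.1 hL) disjoint_sdiff)
    have hinj : Set.InjOn (K ∪ ·) (G \ K).powerset := fun L hL M hM h => by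
      rw [← hcancel L hL, ← hcancel M hM]
      exact congrArg (· \ K) h
    have hsum : ∑ L ∈ (G \ K).powerset, (-1 : R) ^ #((K ∪ L) \ K) =
        if G \ K = ∅ then 1 else 0 := by
      rw [← Int.cast_one (R := R), ← Int.cast_zero (R := R), ← apply_ite Int.cast,
        ← sum_powerset_neg_one_pow_card]
      push_cast
      exact sum_congr rfl fun L hL => by rw [hcancel L hL]
    rw [Icc_eq_image_powerset hKG, sum_image hinj, hsum]
    exact if_congr ⟨fun h => subset_antisymm hKG (sdiff_eq_empty_iff_subset.1 h),
      fun h => by simp [h]⟩ rfl rfl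
  · rw [Icc_eq_empty (fun h => hKG h), sum_empty, if_neg (fun h => hKG h.le)]

theorem sum_Icc_neg_one_pow_card_sdiff_right (K G : Finset ι) :
    ∑ H ∈ Icc K G, (-1 : R) ^ #(G \ H) = if K = G then 1 else 0 := by
  have hsign : ∀ H ∈ Icc K G, (-1 : R) ^ #(G \ H) = (-1) ^ #(G \ K) * (-1) ^ #(H \ K) := by
    intro H hH
    obtain ⟨hKH, hHG⟩ := mem_Icc.1 hH
    rw [← sdiff_union_sdiff_cancel hHG hKH,
      card_union_of_disjoint (disjoint_of_subset_right sdiff_subset sdiff_disjoint), pow_add,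
      mul_assoc, ← pow_add, ← two_mul, pow_mul, neg_one_sq, one_pow, mul_one]
  rw [sum_congr rfl hsign, ← mul_sum, sum_Icc_neg_one_pow_card_sdiff_left]
  split_ifs with h <;> simp [h]

theorem prod_sdiff_mul_prod_sdiff {M : Type*} [CommMonoid M] (a : ι → M) {K H G : Finset ι}
    (hKH : K ⊆ H) (hHG : H ⊆ G) : (∏ j ∈ G \ H, a j) * ∏ j ∈ H \ K, a j = ∏ j ∈ G \ K, a j := by
  rw [← prod_union (disjoint_of_subset_right sdiff_subset sdiff_disjoint),
    sdiff_union_sdiff_cancel hHG hKH]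

theorem sum_powerset_sum_powerset_comm {M : Type*} [AddCommMonoid M] (G : Finset ι)
    (F : Finset ι → Finset ι → M) :
    ∑ H ∈ G.powerset, ∑ K ∈ H.powerset, F H K = ∑ K ∈ G.powerset, ∑ H ∈ Icc K G, F H K :=
  sum_comm' fun H K => by
    simp only [mem_powerset, mem_Icc]
    exact ⟨fun ⟨hHG, hKH⟩ => ⟨⟨hKH, hHG⟩, hKH.trans hHG⟩, fun ⟨⟨hKH, hHG⟩, _⟩ => ⟨hHG, hKH⟩⟩

def weightedZeta (a : ι → R) (g : Finset ι → R) (G : Finset ι) : R :=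
  ∑ H ∈ G.powerset, (∏ j ∈ G \ H, a j) * g H

def weightedMoebius (a : ι → R) (f : Finset ι → R) (H : Finset ι) : R :=
  ∑ G ∈ H.powerset, (-1) ^ #(H \ G) * (∏ j ∈ H \ G, a j) * f G

theorem weightedZeta_weightedMoebius (a : ι → R) (f : Finset ι → R) :
    weightedZeta a (weightedMoebius a f) = f := by
  funext G
  calc weightedZeta a (weightedMoebius a f) G
      = ∑ K ∈ G.powerset,
          (∑ H ∈ Icc K G, (-1 : R) ^ #(H \ K)) * ((∏ j ∈ G \ K, a j) * f K) := by
        simp only [weightedZeta, weightedMoebius, mul_sum, sum_powerset_sum_powerset_comm, sum_mul]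
        refine sum_congr rfl fun K _ => sum_congr rfl fun H hH => ?_
        obtain ⟨hKH, hHG⟩ := mem_Icc.1 hH
        rw [← prod_sdiff_mul_prod_sdiff a hKH hHG]
        ring
    _ = f G := by
        simp only [sum_Icc_neg_one_pow_card_sdiff_left, ite_mul, one_mul, zero_mul,
          sum_ite_eq', mem_powerset_self, if_true, sdiff_self, bot_eq_empty, prod_empty]

theorem weightedMoebius_weightedZeta (a : ι → R) (g : Finset ι → R) :
    weightedMoebius a (weightedZeta a g) = g := by
  funext H
  calc weightedMoebius a (weightedZeta a g) H
      = ∑ L ∈ H.powerset,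
          (∑ K ∈ Icc L H, (-1 : R) ^ #(H \ K)) * ((∏ j ∈ H \ L, a j) * g L) := by
        simp only [weightedZeta, weightedMoebius, mul_sum, sum_powerset_sum_powerset_comm, sum_mul]
        refine sum_congr rfl fun L _ => sum_congr rfl fun K hK => ?_
        obtain ⟨hLK, hKH⟩ := mem_Icc.1 hK
        rw [← prod_sdiff_mul_prod_sdiff a hLK hKH]
        ring
    _ = g H := by
        simp only [sum_Icc_neg_one_pow_card_sdiff_right, ite_mul, one_mul, zero_mul,
          sum_ite_eq', mem_powerset_self, if_true, sdiff_self, bot_eq_empty, prod_empty]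

theorem weightedMoebius_eq_zero {a : ι → R} {f : Finset ι → R} {H : Finset ι} {i : ι}
    (hi : i ∈ H) (ha : a i = 1) (hf : ∀ G, f (insert i G) = f G) :
    weightedMoebius a f H = 0 := by
  rw [← insert_erase hi]
  set H' := H.erase i
  have hiH' : i ∉ H' := notMem_erase i H
  rw [weightedMoebius, sum_powerset_insert hiH', ← sum_add_distrib]
  refine sum_eq_zero fun G hG => ?_
  have hiG : i ∉ G := fun h => hiH' (mem_powerset.1 hG h)
  have hi_sdiff : i ∉ H' \ G := fun h => hiH' (mem_sdiff.1 h).1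
  rw [insert_sdiff_insert, sdiff_insert_of_notMem hiH', insert_sdiff_of_notMem _ hiG,
    card_insert_of_notMem hi_sdiff, prod_insert hi_sdiff, hf, ha]
  ring

end Finset

namespace MeasureTheory.SignedMeasure

variable {α β : Type*} [MeasurableSpace α] [MeasurableSpace β]

theorem apply_eq_real_posPart_sub_real_negPart (μ : SignedMeasure α) {s : Set α}
    (hs : MeasurableSet s) :
    μ s = μ.toJordanDecomposition.posPart.real s - μ.toJordanDecomposition.negPart.real s := by
  conv_lhs => rw [← μ.toSignedMeasure_toJordanDecomposition]
  exact Measure.toSignedMeasure_sub_apply hs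

noncomputable def prod (μ : SignedMeasure α) (ν : Measure β) [IsFiniteMeasure ν] :
    SignedMeasure (α × β) :=
  (μ.toJordanDecomposition.posPart.prod ν).toSignedMeasure -
    (μ.toJordanDecomposition.negPart.prod ν).toSignedMeasure

theorem prod_apply_prod (μ : SignedMeasure α) (ν : Measure β) [IsFiniteMeasure ν] {s : Set α}
    {t : Set β} (hs : MeasurableSet s) (ht : MeasurableSet t) :
    μ.prod ν (s ×ˢ t) = μ s * ν.real t := by
  rw [prod, Measure.toSignedMeasure_sub_apply (hs.prod ht), measureReal_prod_prod,
    measureReal_prod_prod, apply_eq_real_posPart_sub_real_negPart μ hs, sub_mul]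

theorem ext_of_univ_pi {ι : Type*} {X : ι → Type*} [∀ i, MeasurableSpace (X i)] (S : Finset ι)
    {μ ν : SignedMeasure (∀ i : S, X i)}
    (h : ∀ A : ∀ i, Set (X i), (∀ i, MeasurableSet (A i)) →
      μ (Set.univ.pi fun i : S => A i) = ν (Set.univ.pi fun i : S => A i)) : μ = ν := by
  classical
  refine VectorMeasure.ext_of_generateFrom _ ?_ generateFrom_pi.symm isPiSystem_pi ?_
  · rintro _ ⟨t, ht, rfl⟩
    have hA : ∀ i, MeasurableSet (if hi : i ∈ S then t ⟨i, hi⟩ else Set.univ) := fun i => by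
      split_ifs
      exacts [ht ⟨i, _⟩ (Set.mem_univ _), MeasurableSet.univ]
    simpa using h _ hA
  · simpa using h (fun _ => Set.univ) fun _ => MeasurableSet.univ

end MeasureTheory.SignedMeasure

namespace MeasureTheory

open Finset

variable {ι : Type*} [DecidableEq ι] {X : ι → Type*}

def recombine (G H : Finset ι) (z : (∀ i, X i) × (∀ i, X i)) : ∀ i : H, X i :=
  H.restrict (G.piecewise z.1 z.2)

theorem recombine_preimage_univ_pi {G H : Finset ι} (hGH : G ⊆ H) (A : ∀ i, Set (X i)) :
    recombine G H ⁻¹' Set.univ.pi (fun i : H => A i) =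
      (G : Set ι).pi A ×ˢ ((H \ G : Finset ι) : Set ι).pi A := by
  ext ⟨x, y⟩
  simp only [recombine, Set.mem_preimage, Set.mem_pi, Set.mem_univ, true_imp_iff, Set.mem_prod,
    Finset.restrict, Subtype.forall, mem_coe, mem_sdiff]
  constructor
  · intro h
    exact ⟨fun i hi => by simpa [hi] using h i (hGH hi),
      fun i ⟨hiH, hiG⟩ => by simpa [hiG] using h i hiH⟩
  · rintro ⟨hx, hy⟩ i hiH
    by_cases hiG : i ∈ G
    · simpa [hiG] using hx i hiG
    · simpa [hiG] using hy i ⟨hiH, hiG⟩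

variable [∀ i, MeasurableSpace (X i)]

theorem measurable_recombine (G H : Finset ι) : Measurable (recombine (X := X) G H) := by
  refine measurable_pi_lambda _ fun i => ?_
  by_cases hi : (i : ι) ∈ G
  · simp only [recombine, Finset.restrict, piecewise_eq_of_mem _ _ _ hi]
    fun_prop
  · simp only [recombine, Finset.restrict, piecewise_eq_of_notMem _ _ _ hi]
    fun_prop

def IsZeroMarginal {H : Finset ι} (ν : SignedMeasure (∀ i : H, X i)) : Prop :=
  ∀ A : ∀ i, Set (X i), (∀ i, MeasurableSet (A i)) → (∃ i ∈ H, A i = Set.univ) →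
    ν (Set.univ.pi fun i : H => A i) = 0

variable [Fintype ι] (P : ∀ i, Measure (X i)) (μ : SignedMeasure (∀ i, X i))

noncomputable def zeroMarginalComponent [∀ i, IsFiniteMeasure (P i)] (H : Finset ι) :
    SignedMeasure (∀ i : H, X i) :=
  ∑ G ∈ H.powerset, (-1 : ℝ) ^ #(H \ G) • (μ.prod (Measure.pi P)).map (recombine G H)

variable [∀ i, IsProbabilityMeasure (P i)]

theorem zeroMarginalComponent_apply_univ_pi {A : ∀ i, Set (X i)}
    (hA : ∀ i, MeasurableSet (A i)) (H : Finset ι) :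
    zeroMarginalComponent P μ H (Set.univ.pi fun i : H => A i) =
      weightedMoebius (fun i => (P i (A i)).toReal) (fun G => μ ((G : Set ι).pi A)) H := by
  rw [zeroMarginalComponent, _root_.sum_apply, weightedMoebius]
  refine sum_congr rfl fun G hG => ?_
  rw [_root_.smul_apply, VectorMeasure.map_apply _ (measurable_recombine G H)
      (.univ_pi fun i => hA i), recombine_preimage_univ_pi (mem_powerset.1 hG),
    SignedMeasure.prod_apply_prod _ _ (.pi (Set.toFinite _).countable fun i _ => hA i)
      (.pi (Set.toFinite _).countable fun i _ => hA i),
    measureReal_def, Measure.pi_pi_finset, ENNReal.toReal_prod, smul_eq_mul]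
  ring

theorem isZeroMarginal_zeroMarginalComponent (H : Finset ι) :
    IsZeroMarginal (zeroMarginalComponent P μ H) := by
  rintro A hA ⟨i, hiH, hAi⟩
  rw [zeroMarginalComponent_apply_univ_pi P μ hA]
  refine weightedMoebius_eq_zero hiH (by simp [hAi]) fun G => ?_
  rw [coe_insert, Set.insert_pi, hAi, Set.preimage_univ, Set.univ_inter]

theorem sum_prod_compl_mul_zeroMarginalComponent {A : ∀ i, Set (X i)}
    (hA : ∀ i, MeasurableSet (A i)) :
    ∑ H : Finset ι, (∏ i ∈ Hᶜ, (P i (A i)).toReal) *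
      zeroMarginalComponent P μ H (Set.univ.pi fun i : H => A i) = μ (Set.univ.pi A) := by
  simp_rw [zeroMarginalComponent_apply_univ_pi P μ hA, compl_eq_univ_sdiff]
  have := congrFun (weightedZeta_weightedMoebius (fun i => (P i (A i)).toReal)
    (fun G => μ ((G : Set ι).pi A))) univ
  rwa [weightedZeta, powerset_univ, coe_univ] at this

theorem apply_pi_eq_weightedZeta_of_isZeroMarginal
    {ν : ∀ H : Finset ι, SignedMeasure (∀ i : H, X i)} (hzm : ∀ H, IsZeroMarginal (ν H))
    (hdec : ∀ A : ∀ i, Set (X i), (∀ i, MeasurableSet (A i)) → μ (Set.univ.pi A) =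
      ∑ H : Finset ι, (∏ i ∈ Hᶜ, (P i (A i)).toReal) * ν H (Set.univ.pi fun i : H => A i))
    {A : ∀ i, Set (X i)} (hA : ∀ i, MeasurableSet (A i)) (G : Finset ι) :
    μ ((G : Set ι).pi A) = weightedZeta (fun i => (P i (A i)).toReal)
      (fun H => ν H (Set.univ.pi fun i : H => A i)) G := by
  set A' := G.piecewise A fun _ => Set.univ
  have hA' : ∀ i, MeasurableSet (A' i) := fun i => by
    by_cases hi : i ∈ G <;> simp [A', hi, hA i]
  rw [← Set.univ_pi_piecewise_univ, piecewise_coe, hdec A' hA', weightedZeta,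
    ← sum_subset (subset_univ G.powerset)]
  · refine sum_congr rfl fun H hH => ?_
    have hHG := mem_powerset.1 hH
    have hprod : ∏ i ∈ Hᶜ, (P i (A' i)).toReal = ∏ i ∈ G \ H, (P i (A i)).toReal := by
      rw [← prod_subset (fun i hi => mem_compl.2 (mem_sdiff.1 hi).2)]
      · exact prod_congr rfl fun i hi => by simp [A', (mem_sdiff.1 hi).1]
      · intro i hiH hi
        have hiG : i ∉ G := fun hiG => hi (mem_sdiff.2 ⟨hiG, mem_compl.1 hiH⟩)
        simp [A', hiG]
    have hrect : (Set.univ.pi fun i : H => A' i) = Set.univ.pi fun i : H => A i := by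
      congr 1
      exact funext fun i => piecewise_eq_of_mem _ _ _ (hHG i.2)
    rw [hprod, hrect]
  · intro H _ hH
    obtain ⟨i, hiH, hiG⟩ := not_subset.1 (fun h => hH (mem_powerset.2 h))
    rw [hzm H A' hA' ⟨i, hiH, piecewise_eq_of_notMem _ _ _ hiG⟩, mul_zero]

theorem apply_pi_eq_zeroMarginalComponent
    {ν : ∀ H : Finset ι, SignedMeasure (∀ i : H, X i)} (hzm : ∀ H, IsZeroMarginal (ν H))
    (hdec : ∀ A : ∀ i, Set (X i), (∀ i, MeasurableSet (A i)) → μ (Set.univ.pi A) =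
      ∑ H : Finset ι, (∏ i ∈ Hᶜ, (P i (A i)).toReal) * ν H (Set.univ.pi fun i : H => A i))
    {A : ∀ i, Set (X i)} (hA : ∀ i, MeasurableSet (A i)) (H : Finset ι) :
    ν H (Set.univ.pi fun i : H => A i) =
      zeroMarginalComponent P μ H (Set.univ.pi fun i : H => A i) := by
  rw [zeroMarginalComponent_apply_univ_pi P μ hA,
    funext (apply_pi_eq_weightedZeta_of_isZeroMarginal P μ hzm hdec hA),
    weightedMoebius_weightedZeta]

end MeasureTheory

open MeasureTheory

/-- unique decomposition of a finite signed measure on a product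
    probability space into zero-marginal components indexed by subsets H of {1,...,p}. -/
theorem signed_measure_zero_marginal_decomposition
    (p : ℕ) (Ωj : Fin p → Type*) [∀ j, MeasurableSpace (Ωj j)]
    (P : ∀ j, Measure (Ωj j)) [∀ j, IsProbabilityMeasure (P j)]
    (μ : SignedMeasure (∀ j, Ωj j)) :
    ∃! ν : ∀ H : Finset (Fin p), SignedMeasure (∀ j : H, Ωj j),
      (∀ H : Finset (Fin p), ∀ A : ∀ j, Set (Ωj j), (∀ j, MeasurableSet (A j)) →
        (∃ j ∈ H, A j = Set.univ) →
        ν H (Set.univ.pi fun j : H => A j) = 0) ∧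
      (∀ A : ∀ j, Set (Ωj j), (∀ j, MeasurableSet (A j)) →
        μ (Set.univ.pi A) =
          ∑ H : Finset (Fin p),
            (∏ j ∈ Hᶜ, (P j (A j)).toReal) * ν H (Set.univ.pi fun j : H => A j)) := by
  refine ⟨zeroMarginalComponent P μ, ⟨isZeroMarginal_zeroMarginalComponent P μ,
    fun A hA => (sum_prod_compl_mul_zeroMarginalComponent P μ hA).symm⟩, ?_⟩
  rintro ν ⟨hzm, hdec⟩
  funext H
  exact SignedMeasure.ext_of_univ_pi H fun A hA =>
    apply_pi_eq_zeroMarginalComponent P μ hzm hdec hA H
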